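/- arXiv:quant-ph/0008095 — 5 statements merged into one kernel-verified Lean document; each statement's English description precedes it below -/
import Mathlib

section
/- Let X be a nonempty subset of the Boolean cube {0,1}^n with |X| = k, and let t_X be the number of edges of the Boolean cube (pairs of vertices differing in exactly one coordinate) with both endpoints in X. Then t_X ≤ (k · log₂ k) / 2. -/
/-- Flip the i-th bit of a Boolean string. -/
def flipBit {n : ℕ} (x : Fin n → Bool) (i : Fin n) : Fin n → Bool :=
  Function.update x i (!(x i))

/-- Twice the number of edges of the Boolean cube with both endpoints in `X`
(each edge counted once from each endpoint). -/
def doubleEdgeCount {n : ℕ} (X : Finset (Fin n → Bool)) : ℕ :=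
  ((Finset.univ : Finset ((Fin n → Bool) × Fin n)).filter
    (fun p => p.1 ∈ X ∧ flipBit p.1 p.2 ∈ X)).card

open Finset

lemma exp_aux {t : ℝ} (ht0 : 0 ≤ t) (ht1 : t ≤ 1) : t * Real.log 2 ≤ Real.log (1 + t) := by
  have h := convexOn_exp.2 (Set.mem_univ (0:ℝ)) (Set.mem_univ (Real.log 2))
      (by linarith : (0:ℝ) ≤ 1 - t) ht0 (by ring)
  simp only [smul_eq_mul, mul_zero, zero_add, Real.exp_zero,
    Real.exp_log two_pos] at h
  have h2 : Real.exp (t * Real.log 2) ≤ 1 + t := by linarith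
  calc t * Real.log 2 = Real.log (Real.exp (t * Real.log 2)) := (Real.log_exp _).symm
    _ ≤ Real.log (1 + t) := Real.log_le_log (Real.exp_pos _) h2

lemma fLemma {a b : ℝ} (hb : 0 ≤ b) (hba : b ≤ a) :
    a * Real.logb 2 a + b * Real.logb 2 b + 2 * b ≤ (a + b) * Real.logb 2 (a + b) := by
  rcases eq_or_lt_of_le hb with rfl | hb0
  · simp
  · have ha : 0 < a := lt_of_lt_of_le hb0 hba
    have hab : 0 < a + b := by linarith
    -- key2 : b ≤ a * logb 2 ((a+b)/a)
    have ht0 : 0 ≤ b / a := by positivity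
    have ht1 : b / a ≤ 1 := (div_le_one ha).2 hba
    have hlog2 : 0 < Real.log 2 := Real.log_pos one_lt_two
    have key2 : b ≤ a * Real.logb 2 ((a + b) / a) := by
      have h1 : (b / a) * Real.log 2 ≤ Real.log (1 + b / a) := exp_aux ht0 ht1
      have h2 : (1 : ℝ) + b / a = (a + b) / a := by field_simp
      have : b / a ≤ Real.logb 2 ((a + b) / a) := by
        rw [Real.logb, le_div_iff₀ hlog2, ← h2]
        exact h1
      calc b = a * (b / a) := by field_simp
        _ ≤ a * Real.logb 2 ((a + b) / a) := by
            exact mul_le_mul_of_nonneg_left this ha.le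
    have key1 : b ≤ b * Real.logb 2 ((a + b) / b) := by
      have h2 : (2 : ℝ) ≤ (a + b) / b := by
        rw [le_div_iff₀ hb0]; linarith
      have : (1 : ℝ) ≤ Real.logb 2 ((a + b) / b) := by
        calc (1:ℝ) = Real.logb 2 2 := (Real.logb_self_eq_one one_lt_two).symm
          _ ≤ _ := Real.logb_le_logb_of_le one_lt_two two_pos h2
      nlinarith
    have e1 : Real.logb 2 ((a + b) / a) = Real.logb 2 (a + b) - Real.logb 2 a :=
      Real.logb_div (by linarith) ha.ne'
    have e2 : Real.logb 2 ((a + b) / b) = Real.logb 2 (a + b) - Real.logb 2 b :=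
      Real.logb_div (by linarith) hb0.ne'
    rw [e1] at key2
    rw [e2] at key1
    nlinarith

lemma flip_cons_zero {n : ℕ} (b : Bool) (y : Fin n → Bool) :
    flipBit (Fin.cons b y) 0 = Fin.cons (!b) y := by
  unfold flipBit
  rw [Fin.cons_zero, Fin.update_cons_zero]

lemma flip_cons_succ {n : ℕ} (b : Bool) (y : Fin n → Bool) (j : Fin n) :
    flipBit (Fin.cons b y) j.succ = Fin.cons b (flipBit y j) := by
  unfold flipBit
  rw [Fin.cons_succ, Fin.cons_update]

/-- The half of `X` with first coordinate `b`. -/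
def halfSet {n : ℕ} (X : Finset (Fin (n+1) → Bool)) (b : Bool) : Finset (Fin n → Bool) :=
  Finset.univ.filter (fun y => Fin.cons b y ∈ X)

lemma mem_halfSet {n : ℕ} (X : Finset (Fin (n+1) → Bool)) (b : Bool) (y : Fin n → Bool) :
    y ∈ halfSet X b ↔ Fin.cons b y ∈ X := by
  simp [halfSet]

lemma card_split {n : ℕ} (X : Finset (Fin (n+1) → Bool)) :
    X.card = (halfSet X false).card + (halfSet X true).card := by
  have h : X.card = ∑ x : Fin (n+1) → Bool, if x ∈ X then 1 else 0 := by
    rw [← Finset.card_filter]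
    congr 1
    ext x
    simp
  rw [h, ← Equiv.sum_comp (Fin.consEquiv (fun _ => Bool))]
  rw [Fintype.sum_prod_type, Fintype.sum_bool]
  simp only [show ∀ (b : Bool) (y : Fin n → Bool),
    (Fin.consEquiv (fun _ => Bool)) (b, y) = Fin.cons b y from fun _ _ => rfl]
  rw [halfSet, halfSet, Finset.card_filter, Finset.card_filter]
  ring

lemma dE_sum {n : ℕ} (X : Finset (Fin n → Bool)) :
    doubleEdgeCount X = ∑ x : Fin n → Bool, ∑ i : Fin n,
      (if x ∈ X ∧ flipBit x i ∈ X then 1 else 0) := by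
  unfold doubleEdgeCount
  rw [Finset.card_filter, Fintype.sum_prod_type]

lemma edge_split {n : ℕ} (X : Finset (Fin (n+1) → Bool)) :
    doubleEdgeCount X = doubleEdgeCount (halfSet X false) + doubleEdgeCount (halfSet X true)
      + 2 * ((halfSet X false) ∩ (halfSet X true)).card := by
  rw [dE_sum X]
  rw [← Equiv.sum_comp (Fin.consEquiv (fun _ => Bool))
    (fun x => ∑ i : Fin (n+1), if x ∈ X ∧ flipBit x i ∈ X then 1 else 0)]
  rw [Fintype.sum_prod_type, Fintype.sum_bool]
  simp only [show ∀ (b : Bool) (y : Fin n → Bool),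
    (Fin.consEquiv (fun _ => Bool)) (b, y) = Fin.cons b y from fun _ _ => rfl]
  have expand : ∀ b : Bool, ∑ y : Fin n → Bool, ∑ i : Fin (n+1),
      (if Fin.cons b y ∈ X ∧ flipBit (Fin.cons b y) i ∈ X then 1 else 0)
      = (∑ y : Fin n → Bool,
          if Fin.cons b y ∈ X ∧ Fin.cons (!b) y ∈ X then 1 else 0)
        + ∑ y : Fin n → Bool, ∑ j : Fin n,
          (if y ∈ halfSet X b ∧ flipBit y j ∈ halfSet X b then 1 else 0) := by
    intro b
    have : ∀ y : Fin n → Bool, ∑ i : Fin (n+1),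
        (if Fin.cons b y ∈ X ∧ flipBit (Fin.cons b y) i ∈ X then 1 else 0)
        = (if Fin.cons b y ∈ X ∧ Fin.cons (!b) y ∈ X then 1 else 0)
          + ∑ j : Fin n,
            (if y ∈ halfSet X b ∧ flipBit y j ∈ halfSet X b then 1 else 0) := by
      intro y
      rw [Fin.sum_univ_succ, flip_cons_zero]
      congr 1
      refine Finset.sum_congr rfl (fun j _ => ?_)
      rw [flip_cons_succ]
      simp only [mem_halfSet]
    rw [Finset.sum_congr rfl (fun y _ => this y), Finset.sum_add_distrib]
  rw [expand true, expand false]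
  rw [← dE_sum (halfSet X true), ← dE_sum (halfSet X false)]
  have hc : ∀ b : Bool, (∑ y : Fin n → Bool,
      if Fin.cons b y ∈ X ∧ Fin.cons (!b) y ∈ X then 1 else 0)
      = ((halfSet X false) ∩ (halfSet X true)).card := by
    intro b
    have hcard : ((halfSet X false) ∩ (halfSet X true)).card
        = ∑ y : Fin n → Bool, if y ∈ halfSet X false ∩ halfSet X true then 1 else 0 := by
      rw [← Finset.card_filter]
      congr 1
      ext y
      simp
    rw [hcard]
    cases b <;>
    · refine Finset.sum_congr rfl (fun y _ => ?_)
      simp [Finset.mem_inter, mem_halfSet, and_comm]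
  rw [hc true, hc false]
  ring

lemma aux_bound : ∀ (n : ℕ) (X : Finset (Fin n → Bool)),
    (doubleEdgeCount X : ℝ) ≤ (X.card : ℝ) * Real.logb 2 (X.card) := by
  intro n
  induction n with
  | zero =>
    intro X
    have h0 : doubleEdgeCount X = 0 := by
      unfold doubleEdgeCount
      simp
    rw [h0]
    rcases Nat.eq_zero_or_pos X.card with h | h
    · simp [h]
    · push_cast
      have : (1 : ℝ) ≤ X.card := by exact_mod_cast h
      have := Real.logb_nonneg one_lt_two this
      positivity
  | succ n ih =>
    intro X
    rw [edge_split X, card_split X]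
    set A := halfSet X false
    set B := halfSet X true
    have hm : ((A ∩ B).card : ℝ) ≤ min (A.card : ℝ) (B.card : ℝ) := by
      apply le_min
      · exact_mod_cast Finset.card_le_card (Finset.inter_subset_left)
      · exact_mod_cast Finset.card_le_card (Finset.inter_subset_right)
    have hA := ih A
    have hB := ih B
    push_cast
    rcases le_total (A.card : ℝ) (B.card : ℝ) with h | h
    · have key := fLemma (Nat.cast_nonneg A.card : (0:ℝ) ≤ A.card) h
      rw [min_eq_left h] at hm
      calc (doubleEdgeCount A : ℝ) + (doubleEdgeCount B : ℝ) + 2 * ((A ∩ B).card : ℝ)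
          ≤ (A.card : ℝ) * Real.logb 2 A.card + (B.card : ℝ) * Real.logb 2 B.card
            + 2 * (A.card : ℝ) := by linarith
        _ ≤ ((B.card : ℝ) + A.card) * Real.logb 2 ((B.card : ℝ) + A.card) := by
            linarith [key]
        _ = ((A.card : ℝ) + B.card) * Real.logb 2 ((A.card : ℝ) + B.card) := by
            ring_nf
    · have key := fLemma (Nat.cast_nonneg B.card : (0:ℝ) ≤ B.card) h
      rw [min_eq_right h] at hm
      calc (doubleEdgeCount A : ℝ) + (doubleEdgeCount B : ℝ) + 2 * ((A ∩ B).card : ℝ)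
          ≤ (A.card : ℝ) * Real.logb 2 A.card + (B.card : ℝ) * Real.logb 2 B.card
            + 2 * (B.card : ℝ) := by linarith
        _ ≤ ((A.card : ℝ) + B.card) * Real.logb 2 ((A.card : ℝ) + B.card) := by
            linarith [key]

/-- For nonempty `X ⊆ {0,1}^n` with `|X| = k`, the number of cube edges inside `X`
is at most `k·log₂ k / 2`. -/
theorem edge_bound {n : ℕ} (X : Finset (Fin n → Bool)) (hX : X.Nonempty) :
    ((doubleEdgeCount X : ℝ) / 2) ≤ (X.card : ℝ) * Real.logb 2 (X.card) / 2 := by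
  have := aux_bound n X
  linarith
end

section
/- For the inductive step of the edge-counting bound: if 1 ≤ a ≤ k/2 for real numbers a and k with k ≥ 2, then (1/2)·a·log₂ a + (1/2)·(k − a)·log₂(k − a) + a ≤ (k · log₂ k)/2. -/
/-- Inductive-step inequality for the edge-counting bound. -/
theorem edge_bound_step (a k : ℝ) (ha : 1 ≤ a) (hak : a ≤ k / 2) (hk : 2 ≤ k) :
    (1/2) * a * Real.logb 2 a + (1/2) * (k - a) * Real.logb 2 (k - a) + a
      ≤ k * Real.logb 2 k / 2 := by
  have ha0 : (0:ℝ) < a := by linarith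
  have hk0 : (0:ℝ) < k := by linarith
  have hka : (0:ℝ) < k - a := by linarith
  have hl2 : (0:ℝ) < Real.log 2 := Real.log_pos (by norm_num)
  have hl2u : Real.log 2 < 0.6931471808 := Real.log_two_lt_d9
  have hl2l : (0.6931471803:ℝ) < Real.log 2 := Real.log_two_gt_d9
  -- key inequality in natural logs
  have key : a * Real.log a + (k - a) * Real.log (k - a) + 2 * a * Real.log 2
      ≤ k * Real.log k := by
    rcases le_or_gt a ((3/10) * k) with hc | hc
    · -- tangent at 1 : log x ≤ x - 1
      have t1 : (Real.log a - Real.log k) * k ≤ a - k := by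
        have h := Real.log_le_sub_one_of_pos (div_pos ha0 hk0)
        rw [Real.log_div ha0.ne' hk0.ne'] at h
        have h' := mul_le_mul_of_nonneg_right h hk0.le
        have e : (a / k - 1) * k = a - k := by field_simp
        linarith [e ▸ h']
      have t2 : (Real.log (k - a) - Real.log k) * k ≤ -a := by
        have h := Real.log_le_sub_one_of_pos (div_pos hka hk0)
        rw [Real.log_div hka.ne' hk0.ne'] at h
        have h' := mul_le_mul_of_nonneg_right h hk0.le
        have e : ((k - a) / k - 1) * k = -a := by field_simp; ring
        linarith [e ▸ h']
      have A := mul_le_mul_of_nonneg_left t1 ha0.le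
      have B := mul_le_mul_of_nonneg_left t2 hka.le
      have f : k * Real.log 2 ≤ k - a := by nlinarith
      have C : a * (k * Real.log 2) ≤ a * (k - a) :=
        mul_le_mul_of_nonneg_left f ha0.le
      have key' : k * (a * Real.log a + (k - a) * Real.log (k - a)
          + 2 * a * Real.log 2) ≤ k * (k * Real.log k) := by nlinarith [A, B, C]
      exact le_of_mul_le_mul_left key' hk0
    · -- tangent at 1/2 : log (2x) ≤ 2x - 1
      have t1 : (Real.log 2 + Real.log a - Real.log k) * k ≤ 2 * a - k := by
        have h := Real.log_le_sub_one_of_pos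
          (show (0:ℝ) < 2 * a / k from div_pos (by linarith) hk0)
        rw [Real.log_div (by positivity) hk0.ne',
          Real.log_mul (by norm_num) ha0.ne'] at h
        have h' := mul_le_mul_of_nonneg_right h hk0.le
        have e : (2 * a / k - 1) * k = 2 * a - k := by field_simp
        linarith [e ▸ h']
      have t2 : (Real.log 2 + Real.log (k - a) - Real.log k) * k ≤ k - 2 * a := by
        have h := Real.log_le_sub_one_of_pos
          (show (0:ℝ) < 2 * (k - a) / k from div_pos (by linarith) hk0)
        rw [Real.log_div (by positivity) hk0.ne',
          Real.log_mul (by norm_num) hka.ne'] at h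
        have h' := mul_le_mul_of_nonneg_right h hk0.le
        have e : (2 * (k - a) / k - 1) * k = k - 2 * a := by field_simp; ring
        linarith [e ▸ h']
      have A := mul_le_mul_of_nonneg_left t1 ha0.le
      have B := mul_le_mul_of_nonneg_left t2 hka.le
      have f : k - 2 * a ≤ k * Real.log 2 := by nlinarith
      have C : (k - 2 * a) * (k - 2 * a) ≤ (k - 2 * a) * (k * Real.log 2) :=
        mul_le_mul_of_nonneg_left f (by linarith)
      have key' : k * (a * Real.log a + (k - a) * Real.log (k - a)
          + 2 * a * Real.log 2) ≤ k * (k * Real.log k) := by nlinarith [A, B, C]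
      exact le_of_mul_le_mul_left key' hk0
  -- convert to logb
  have e1 : (1/2) * a * Real.logb 2 a + (1/2) * (k - a) * Real.logb 2 (k - a) + a
      = (a * Real.log a + (k - a) * Real.log (k - a) + 2 * a * Real.log 2)
        / (2 * Real.log 2) := by
    rw [Real.logb, Real.logb]; field_simp
  have e2 : k * Real.logb 2 k / 2 = (k * Real.log k) / (2 * Real.log 2) := by
    rw [Real.logb]; ring
  rw [e1, e2]
  gcongr
end

section
/- If g̃ : {0,1}^n → [0,1] has Fourier degree at most d, then s̄_{g̃} ≤ 4·d·p_{g̃}/n, where p_{g̃} = E_x[g̃(x)] and s̄_{g̃} = E_{x,i}[(g̃(x) − g̃(x ⊕ e_i))²]. -/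
open Finset

/-- Fourier coefficient `ĝ_r = E_x[g(x)·(−1)^{x·r}]`. -/
noncomputable def cubeFourier {n : ℕ} (g : (Fin n → Bool) → ℝ) (r : Fin n → Bool) : ℝ :=
  (∑ x : Fin n → Bool, g x * (-1 : ℝ) ^ (Finset.univ.filter (fun i => x i ∧ r i)).card) / 2 ^ n

/-- Hamming weight of `r`. -/
def hammingWt {n : ℕ} (r : Fin n → Bool) : ℕ :=
  (Finset.univ.filter (fun i => r i = true)).card

/-- Average (squared) sensitivity. -/
noncomputable def avgSens {n : ℕ} (g : (Fin n → Bool) → ℝ) : ℝ :=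
  (∑ x : Fin n → Bool, ∑ i : Fin n, (g x - g (flipBit x i)) ^ 2) / (2 ^ n * n)

noncomputable def chi {n : ℕ} (x r : Fin n → Bool) : ℝ :=
  ∏ i, if x i ∧ r i then (-1 : ℝ) else 1

lemma chi_eq {n : ℕ} (x r : Fin n → Bool) :
    (-1 : ℝ) ^ (Finset.univ.filter (fun i => x i ∧ r i)).card = chi x r := by
  rw [chi, Finset.prod_ite, Finset.prod_const, Finset.prod_const, one_pow, mul_one]

lemma cubeFourier_eq {n : ℕ} (g : (Fin n → Bool) → ℝ) (r : Fin n → Bool) :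
    cubeFourier g r = (∑ x : Fin n → Bool, g x * chi x r) / 2 ^ n := by
  simp only [cubeFourier, chi_eq]

lemma sum_chi_mul {n : ℕ} (x y : Fin n → Bool) :
    ∑ r : Fin n → Bool, chi x r * chi y r = if x = y then (2:ℝ)^n else 0 := by
  have h1 : ∀ r : Fin n → Bool, chi x r * chi y r
      = ∏ i, ((if x i ∧ r i then (-1:ℝ) else 1) * (if y i ∧ r i then (-1:ℝ) else 1)) := by
    intro r; rw [chi, chi, Finset.prod_mul_distrib]
  simp only [h1]
  have h2 : ∑ r : Fin n → Bool, ∏ i,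
      ((if x i ∧ r i then (-1:ℝ) else 1) * (if y i ∧ r i then (-1:ℝ) else 1))
      = ∏ i, ∑ b : Bool, ((if x i ∧ b then (-1:ℝ) else 1) * (if y i ∧ b then (-1:ℝ) else 1)) := by
    rw [Finset.prod_univ_sum]
    rw [Fintype.piFinset_univ]
  rw [h2]
  have h3 : ∀ i : Fin n, (∑ b : Bool, ((if x i ∧ b then (-1:ℝ) else 1) * (if y i ∧ b then (-1:ℝ) else 1)))
      = if x i = y i then (2:ℝ) else 0 := by
    intro i
    cases hx : x i <;> cases hy : y i <;> simp [Fintype.sum_bool] <;> norm_num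
  simp only [h3]
  by_cases hxy : x = y
  · subst hxy; simp
  · rw [if_neg hxy]
    have : ∃ i, x i ≠ y i := by
      by_contra h; push_neg at h; exact hxy (funext h)
    obtain ⟨i, hi⟩ := this
    exact Finset.prod_eq_zero (Finset.mem_univ i) (by rw [if_neg hi])

lemma parseval {n : ℕ} (h : (Fin n → Bool) → ℝ) :
    ∑ x : Fin n → Bool, (h x)^2 = 2^n * ∑ r : Fin n → Bool, (cubeFourier h r)^2 := by
  have h2n : (0:ℝ) < 2^n := by positivity
  simp only [cubeFourier_eq, div_pow]
  rw [Finset.mul_sum]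
  have key : ∀ r : Fin n → Bool,
      (2:ℝ)^n * ((∑ x : Fin n → Bool, h x * chi x r)^2 / ((2:ℝ)^n)^2)
      = (∑ x : Fin n → Bool, ∑ y : Fin n → Bool, h x * h y * (chi x r * chi y r)) / 2^n := by
    intro r
    rw [pow_two, Finset.sum_mul_sum]
    have : ∀ x y : Fin n → Bool, h x * chi x r * (h y * chi y r) = h x * h y * (chi x r * chi y r) := by
      intro x y; ring
    simp only [this]
    rw [mul_div_assoc', pow_two, mul_div_mul_left _ _ (ne_of_gt h2n)]
  simp only [key, ← Finset.sum_div]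
  rw [Finset.sum_comm (γ := Fin n → Bool)]
  have swap2 : ∀ x : Fin n → Bool, ∑ r : Fin n → Bool, ∑ y : Fin n → Bool, h x * h y * (chi x r * chi y r)
      = ∑ y : Fin n → Bool, h x * h y * ∑ r : Fin n → Bool, (chi x r * chi y r) := by
    intro x
    rw [Finset.sum_comm]
    simp [Finset.mul_sum]
  simp only [swap2, sum_chi_mul]
  have : ∀ x : Fin n → Bool, ∑ y : Fin n → Bool, h x * h y * (if x = y then (2:ℝ)^n else 0)
      = h x * h x * 2^n := by
    intro x
    rw [Finset.sum_eq_single x]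
    · simp
    · intro y _ hy; rw [if_neg (fun hh => hy hh.symm), mul_zero]
    · intro hx; exact absurd (Finset.mem_univ x) hx
  simp only [this]
  rw [← Finset.sum_mul, mul_div_assoc, div_self (ne_of_gt h2n), mul_one]
  simp [pow_two]

lemma flipBit_invol {n : ℕ} (i : Fin n) :
    Function.Involutive (fun x : Fin n → Bool => flipBit x i) := by
  intro x
  simp only [flipBit, Function.update_idem, Function.update_self, Bool.not_not,
    Function.update_eq_self]

lemma chi_flip {n : ℕ} (x r : Fin n → Bool) (i : Fin n) :
    chi (flipBit x i) r = (if r i then (-1:ℝ) else 1) * chi x r := by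
  unfold chi
  rw [← Finset.mul_prod_erase _ _ (Finset.mem_univ i), ← Finset.mul_prod_erase _ (fun j => if x j ∧ r j then (-1:ℝ) else 1) (Finset.mem_univ i), ← mul_assoc]
  congr 1
  · simp only [flipBit, Function.update_self]
    cases hr : r i <;> cases hx : x i <;> norm_num
  · apply Finset.prod_congr rfl
    intro j hj
    have hji : j ≠ i := (Finset.mem_erase.mp hj).1
    simp [flipBit, Function.update_of_ne hji]

lemma fourier_diff {n : ℕ} (g : (Fin n → Bool) → ℝ) (i : Fin n) (r : Fin n → Bool) :
    cubeFourier (fun x => g x - g (flipBit x i)) r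
      = if r i then 2 * cubeFourier g r else 0 := by
  rw [cubeFourier_eq, cubeFourier_eq]
  have h1 : ∑ x : Fin n → Bool, (g x - g (flipBit x i)) * chi x r
      = (∑ x : Fin n → Bool, g x * chi x r) - ∑ x : Fin n → Bool, g (flipBit x i) * chi x r := by
    rw [← Finset.sum_sub_distrib]; congr 1; funext x; ring
  have h2 : ∑ x : Fin n → Bool, g (flipBit x i) * chi x r
      = (if r i then (-1:ℝ) else 1) * ∑ x : Fin n → Bool, g x * chi x r := by
    rw [Finset.mul_sum]
    apply Fintype.sum_equiv (Function.Involutive.toPerm _ (flipBit_invol i))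
    intro x
    simp only [Function.Involutive.coe_toPerm]
    rw [chi_flip]
    cases hr : r i <;> simp [hr] <;> ring
  rw [h1, h2]
  cases hr : r i <;> simp <;> ring

/-- If `g̃ : {0,1}^n → [0,1]` has Fourier degree at most `d`, then
`s̄_{g̃} ≤ 4·d·p_{g̃}/n` where `p_{g̃} = E_x[g̃(x)]`. -/
theorem avg_sens_le_degree_mean {n d : ℕ} (hn : 0 < n) (g : (Fin n → Bool) → ℝ)
    (hg0 : ∀ x, 0 ≤ g x) (hg1 : ∀ x, g x ≤ 1)
    (hdeg : ∀ r : Fin n → Bool, d < hammingWt r → cubeFourier g r = 0) :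
    avgSens g ≤ 4 * d * ((∑ x : Fin n → Bool, g x) / 2 ^ n) / n := by
  have h2n : (0:ℝ) < 2^n := by positivity
  have hnR : (0:ℝ) < n := by exact_mod_cast hn
  -- numerator bound
  have hswap : ∑ x : Fin n → Bool, ∑ i : Fin n, (g x - g (flipBit x i)) ^ 2
      = ∑ i : Fin n, ∑ x : Fin n → Bool, ((fun x => g x - g (flipBit x i)) x) ^ 2 :=
    Finset.sum_comm
  have hpar : ∀ i : Fin n, ∑ x : Fin n → Bool, ((fun x => g x - g (flipBit x i)) x) ^ 2
      = 2^n * ∑ r : Fin n → Bool, (if r i then 4 * (cubeFourier g r)^2 else 0) := by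
    intro i
    rw [parseval]
    congr 1
    apply Finset.sum_congr rfl
    intro r _
    rw [fourier_diff]
    cases hr : r i <;> simp <;> ring
  have hwt : ∑ i : Fin n, ∑ r : Fin n → Bool, (if r i then 4 * (cubeFourier g r)^2 else 0)
      = ∑ r : Fin n → Bool, (hammingWt r : ℝ) * (4 * (cubeFourier g r)^2) := by
    rw [Finset.sum_comm]
    apply Finset.sum_congr rfl
    intro r _
    rw [← Finset.sum_filter, Finset.sum_const, nsmul_eq_mul]
    rfl
  have hbd : ∑ r : Fin n → Bool, (hammingWt r : ℝ) * (4 * (cubeFourier g r)^2)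
      ≤ (d:ℝ) * ∑ r : Fin n → Bool, 4 * (cubeFourier g r)^2 := by
    rw [Finset.mul_sum]
    apply Finset.sum_le_sum
    intro r _
    by_cases hr : d < hammingWt r
    · rw [hdeg r hr]; simp
    · push_neg at hr
      apply mul_le_mul_of_nonneg_right _ (by positivity)
      exact_mod_cast hr
  have hpars : ∑ r : Fin n → Bool, 4 * (cubeFourier g r)^2 = 4 * (∑ x : Fin n → Bool, (g x)^2) / 2^n := by
    rw [← Finset.mul_sum]
    rw [parseval g]
    field_simp
  have hsq : ∑ x : Fin n → Bool, (g x)^2 ≤ ∑ x : Fin n → Bool, g x := by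
    apply Finset.sum_le_sum
    intro x _
    nlinarith [hg0 x, hg1 x]
  -- put together
  have hnum : ∑ x : Fin n → Bool, ∑ i : Fin n, (g x - g (flipBit x i)) ^ 2
      ≤ 4 * d * (∑ x : Fin n → Bool, g x) := by
    rw [hswap]
    calc ∑ i : Fin n, ∑ x : Fin n → Bool, ((fun x => g x - g (flipBit x i)) x) ^ 2
        = 2^n * ∑ i : Fin n, ∑ r : Fin n → Bool, (if r i then 4 * (cubeFourier g r)^2 else 0) := by
          rw [Finset.mul_sum]; exact Finset.sum_congr rfl fun i _ => hpar i
      _ ≤ 2^n * ((d:ℝ) * (4 * (∑ x : Fin n → Bool, (g x)^2) / 2^n)) := by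
          apply mul_le_mul_of_nonneg_left _ (le_of_lt h2n)
          rw [hwt, ← hpars]
          exact hbd
      _ = 4 * d * (∑ x : Fin n → Bool, (g x)^2) := by field_simp
      _ ≤ 4 * d * (∑ x : Fin n → Bool, g x) := by
          apply mul_le_mul_of_nonneg_left hsq (by positivity)
  rw [avgSens]
  have hrhs : 4 * (d:ℝ) * ((∑ x : Fin n → Bool, g x) / 2 ^ n) / n
      = (4 * d * (∑ x : Fin n → Bool, g x)) / (2^n * n) := by
    field_simp
  rw [hrhs]
  apply div_le_div_of_nonneg_right hnum (by positivity)
end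

section
/- Let g : {0,1}^n → {0,1} be Boolean and g̃ : {0,1}^n → [0,1] a degree-d multilinear polynomial with |g̃(x) − g(x)| ≤ 1/3 for all x. Then d ≥ n·s̄_g/(36·p_{g̃}), where p_{g̃} = E_x[g̃(x)] and s̄_g is the average sensitivity of g. -/
/-- Average sensitivity of a Boolean function as a probability. -/
noncomputable def avgSensBool {n : ℕ} (g : (Fin n → Bool) → Bool) : ℝ :=
  (((Finset.univ : Finset ((Fin n → Bool) × Fin n)).filter
      (fun p => g p.1 ≠ g (flipBit p.1 p.2))).card : ℝ) / (2 ^ n * n)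

namespace DLB
variable {n : ℕ}

noncomputable def chi (r x : Fin n → Bool) : ℝ := ∏ i, (if x i ∧ r i then (-1:ℝ) else 1)

lemma chi_eq (r x : Fin n → Bool) :
    (-1:ℝ) ^ (Finset.univ.filter (fun i => x i ∧ r i)).card = chi r x := by
  rw [chi, Finset.prod_ite, Finset.prod_const, Finset.prod_const, one_pow, mul_one]

lemma chi_symm (r x : Fin n → Bool) : chi r x = chi x r := by
  unfold chi
  exact Finset.prod_congr rfl (fun i _ => by simp [and_comm])

lemma chi_mul (r s x : Fin n → Bool) :
    chi r x * chi s x = chi (fun i => xor (r i) (s i)) x := by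
  unfold chi
  rw [← Finset.prod_mul_distrib]
  refine Finset.prod_congr rfl (fun i _ => ?_)
  cases h1 : x i <;> cases h2 : r i <;> cases h3 : s i <;> simp [h1, h2, h3]

lemma sum_chi (r : Fin n → Bool) :
    ∑ x : Fin n → Bool, chi r x = if r = (fun _ => false) then (2:ℝ)^n else 0 := by
  unfold chi
  have : ∑ x : Fin n → Bool, ∏ i, (if x i ∧ r i then (-1:ℝ) else 1)
      = ∏ i : Fin n, ∑ b : Bool, (if b ∧ r i then (-1:ℝ) else 1) := by
    rw [Finset.prod_univ_sum, Fintype.piFinset_univ]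
  rw [this]
  by_cases h : r = (fun _ => false)
  · subst h; simp
  · rw [if_neg h]
    obtain ⟨i, hi⟩ : ∃ i, r i = true := by
      by_contra hc
      push_neg at hc
      exact h (funext fun i => by simpa using hc i)
    apply Finset.prod_eq_zero (Finset.mem_univ i)
    rw [hi]; simp

noncomputable def fhat (f : (Fin n → Bool) → ℝ) (r : Fin n → Bool) : ℝ :=
  (∑ x : Fin n → Bool, f x * chi r x) / 2 ^ n

lemma sum_chi_mul (y x : Fin n → Bool) :
    ∑ r : Fin n → Bool, chi r y * chi r x = if y = x then (2:ℝ)^n else 0 := by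
  have step : ∀ r : Fin n → Bool, chi r y * chi r x
      = chi (fun i => xor (y i) (x i)) r := by
    intro r
    rw [chi_symm r y, chi_symm r x, chi_mul]
  rw [Finset.sum_congr rfl (fun r _ => step r), sum_chi]
  congr 1
  simp only [eq_iff_iff]
  constructor
  · intro h
    funext i
    have := congrFun h i
    cases hy : y i <;> cases hx : x i <;> simp_all
  · intro h; subst h; funext i; simp

lemma inversion (f : (Fin n → Bool) → ℝ) (x : Fin n → Bool) :
    f x = ∑ r : Fin n → Bool, fhat f r * chi r x := by
  have h2 : (2:ℝ) ^ n ≠ 0 := by positivity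
  have key : ∑ r : Fin n → Bool, (∑ y : Fin n → Bool, f y * chi r y) * chi r x
      = f x * 2 ^ n := by
    have e1 : ∀ r : Fin n → Bool, (∑ y : Fin n → Bool, f y * chi r y) * chi r x
        = ∑ y : Fin n → Bool, f y * (chi r y * chi r x) := by
      intro r
      rw [Finset.sum_mul]
      exact Finset.sum_congr rfl fun y _ => by ring
    rw [Finset.sum_congr rfl fun r _ => e1 r, Finset.sum_comm]
    rw [Finset.sum_congr rfl fun y _ => by rw [← Finset.mul_sum, sum_chi_mul]]
    simp
  unfold fhat
  rw [Finset.sum_congr rfl fun r _ => div_mul_eq_mul_div _ _ _, ← Finset.sum_div, key]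
  field_simp

lemma parseval_mul (f h : (Fin n → Bool) → ℝ) :
    ∑ x : Fin n → Bool, f x * h x
      = 2 ^ n * ∑ r : Fin n → Bool, fhat f r * fhat h r := by
  have h2 : (2:ℝ) ^ n ≠ 0 := by positivity
  have hS : ∀ r : Fin n → Bool, ∑ x : Fin n → Bool, f x * chi r x = 2 ^ n * fhat f r := by
    intro r
    unfold fhat
    field_simp
  calc ∑ x : Fin n → Bool, f x * h x
      = ∑ x : Fin n → Bool, f x * ∑ r : Fin n → Bool, fhat h r * chi r x :=
        Finset.sum_congr rfl fun x _ => by rw [← inversion]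
    _ = ∑ x : Fin n → Bool, ∑ r : Fin n → Bool, fhat h r * (f x * chi r x) := by
        refine Finset.sum_congr rfl fun x _ => ?_
        rw [Finset.mul_sum]
        exact Finset.sum_congr rfl fun r _ => by ring
    _ = ∑ r : Fin n → Bool, fhat h r * ∑ x : Fin n → Bool, f x * chi r x := by
        rw [Finset.sum_comm]
        exact Finset.sum_congr rfl fun r _ => by rw [Finset.mul_sum]
    _ = ∑ r : Fin n → Bool, fhat h r * (2 ^ n * fhat f r) :=
        Finset.sum_congr rfl fun r _ => by rw [hS]
    _ = 2 ^ n * ∑ r : Fin n → Bool, fhat f r * fhat h r := by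
        rw [Finset.mul_sum]
        exact Finset.sum_congr rfl fun r _ => by ring

lemma flipBit_invol (x : Fin n → Bool) (i : Fin n) : flipBit (flipBit x i) i = x := by
  funext j
  by_cases h : j = i
  · subst h; simp [flipBit]
  · simp [flipBit, Function.update_of_ne h]

lemma chi_flip (r x : Fin n → Bool) (i : Fin n) :
    chi r (flipBit x i) = (if r i then (-1:ℝ) else 1) * chi r x := by
  unfold chi
  rw [← Finset.mul_prod_erase Finset.univ _ (Finset.mem_univ i),
      ← Finset.mul_prod_erase Finset.univ
        (fun j => (if x j ∧ r j then (-1:ℝ) else 1)) (Finset.mem_univ i), ← mul_assoc]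
  congr 1
  · cases h1 : x i <;> cases h2 : r i <;> simp [flipBit, h1, h2]
  · refine Finset.prod_congr rfl (fun j hj => ?_)
    have : j ≠ i := (Finset.mem_erase.mp hj).1
    simp [flipBit, Function.update_of_ne this]

lemma fhat_flip (f : (Fin n → Bool) → ℝ) (i : Fin n) (r : Fin n → Bool) :
    fhat (fun x => f (flipBit x i)) r = (if r i then (-1:ℝ) else 1) * fhat f r := by
  unfold fhat
  have hnum : ∑ x : Fin n → Bool, f (flipBit x i) * chi r x
      = (if r i then (-1:ℝ) else 1) * ∑ x : Fin n → Bool, f x * chi r x := by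
    have hinv : Function.Involutive (fun x : Fin n → Bool => flipBit x i) :=
      fun x => flipBit_invol x i
    rw [Fintype.sum_equiv (Function.Involutive.toPerm _ hinv)
      (fun x => f (flipBit x i) * chi r x)
      (fun y => f y * chi r (flipBit y i)) (fun x => by
        simp only [Function.Involutive.coe_toPerm, flipBit_invol])]
    rw [Finset.mul_sum]
    refine Finset.sum_congr rfl fun y _ => ?_
    rw [chi_flip]
    ring
  rw [hnum, mul_div_assoc]

lemma fhat_sub (f h : (Fin n → Bool) → ℝ) (r : Fin n → Bool) :
    fhat (fun x => f x - h x) r = fhat f r - fhat h r := by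
  unfold fhat
  rw [← sub_div, ← Finset.sum_sub_distrib]
  congr 1
  exact Finset.sum_congr rfl fun x _ => by ring

lemma fhat_deriv (f : (Fin n → Bool) → ℝ) (i : Fin n) (r : Fin n → Bool) :
    fhat (fun x => f x - f (flipBit x i)) r = if r i then 2 * fhat f r else 0 := by
  rw [fhat_sub, fhat_flip]
  cases h : r i <;> simp [h] <;> ring

lemma sum_sq_deriv (f : (Fin n → Bool) → ℝ) (i : Fin n) :
    ∑ x : Fin n → Bool, (f x - f (flipBit x i))^2
      = 2 ^ n * ∑ r : Fin n → Bool, (if r i then 4 * (fhat f r)^2 else 0) := by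
  have := parseval_mul (fun x => f x - f (flipBit x i)) (fun x => f x - f (flipBit x i))
  simp only [fhat_deriv] at this
  calc ∑ x : Fin n → Bool, (f x - f (flipBit x i))^2
      = ∑ x : Fin n → Bool, (f x - f (flipBit x i)) * (f x - f (flipBit x i)) := by
        exact Finset.sum_congr rfl fun x _ => by ring
    _ = 2 ^ n * ∑ r : Fin n → Bool,
          (if r i then 2 * fhat f r else 0) * (if r i then 2 * fhat f r else 0) := this
    _ = 2 ^ n * ∑ r : Fin n → Bool, (if r i then 4 * (fhat f r)^2 else 0) := by
        congr 1
        refine Finset.sum_congr rfl fun r _ => ?_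
        cases h : r i <;> simp <;> ring

end DLB

/-- Degree lower bound: `d ≥ n·s̄_g/(36·p_{g̃})`. -/
theorem degree_lower_bound {n d : ℕ} (hn : 0 < n) (g : (Fin n → Bool) → Bool)
    (gt : (Fin n → Bool) → ℝ) (hg0 : ∀ x, 0 ≤ gt x) (hg1 : ∀ x, gt x ≤ 1)
    (happrox : ∀ x, |gt x - (if g x then (1:ℝ) else 0)| ≤ 1/3)
    (hdeg : ∀ r : Fin n → Bool, d < hammingWt r → cubeFourier gt r = 0)
    (hp : 0 < (∑ x : Fin n → Bool, gt x) / 2 ^ n) :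
    (d : ℝ) ≥ n * avgSensBool g / (36 * ((∑ x : Fin n → Bool, gt x) / 2 ^ n)) := by
  classical
  unfold avgSensBool
  have h2 : (0:ℝ) < 2 ^ n := by positivity
  set S := ∑ x : Fin n → Bool, gt x with hSdef
  have hSpos : 0 < S := by
    have : S = S / 2 ^ n * 2 ^ n := by field_simp
    nlinarith [hp]
  have hfc : ∀ r : Fin n → Bool, DLB.fhat gt r = cubeFourier gt r := by
    intro r
    unfold DLB.fhat cubeFourier
    congr 1
    exact Finset.sum_congr rfl fun x _ => by rw [DLB.chi_eq]
  set Cs := (Finset.univ : Finset ((Fin n → Bool) × Fin n)).filter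
      (fun p => g p.1 ≠ g (flipBit p.1 p.2)) with hCs
  set T := ∑ p : (Fin n → Bool) × Fin n, (gt p.1 - gt (flipBit p.1 p.2))^2 with hTdef
  -- Lower bound on T
  have hlow : (Cs.card : ℝ) * (1/9) ≤ T := by
    have e0 : (Cs.card : ℝ) * (1/9) = ∑ _p ∈ Cs, (1:ℝ)/9 := by
      rw [Finset.sum_const, nsmul_eq_mul]
    rw [e0]
    calc ∑ _p ∈ Cs, (1:ℝ)/9
        ≤ ∑ p ∈ Cs, (gt p.1 - gt (flipBit p.1 p.2))^2 := by
          refine Finset.sum_le_sum fun p hpmem => ?_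
          have hne : g p.1 ≠ g (flipBit p.1 p.2) := (Finset.mem_filter.mp hpmem).2
          have ha := abs_le.mp (happrox p.1)
          have hb := abs_le.mp (happrox (flipBit p.1 p.2))
          cases hgx : g p.1 <;> cases hgy : g (flipBit p.1 p.2) <;>
            simp [hgx, hgy] at ha hb hne <;>
            nlinarith [ha.1, ha.2, hb.1, hb.2]
      _ ≤ T := by
          rw [hTdef]
          exact Finset.sum_le_sum_of_subset_of_nonneg (Finset.filter_subset _ _)
            (fun p _ _ => sq_nonneg _)
  -- Upper bound on T
  have hup : T ≤ 4 * d * S := by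
    have hT2 : T = ∑ i : Fin n, ∑ x : Fin n → Bool, (gt x - gt (flipBit x i))^2 := by
      rw [hTdef, Fintype.sum_prod_type, Finset.sum_comm]
    have hT4 : T = 2 ^ n * ∑ r : Fin n → Bool,
        (hammingWt r : ℝ) * (4 * (DLB.fhat gt r)^2) := by
      rw [hT2, Finset.sum_congr rfl fun i _ => DLB.sum_sq_deriv gt i, ← Finset.mul_sum]
      congr 1
      rw [Finset.sum_comm]
      refine Finset.sum_congr rfl fun r _ => ?_
      rw [Finset.sum_ite, Finset.sum_const, Finset.sum_const_zero, add_zero,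
        nsmul_eq_mul, hammingWt]
    have hbound : ∀ r : Fin n → Bool,
        (hammingWt r : ℝ) * (4 * (DLB.fhat gt r)^2)
          ≤ (d:ℝ) * (4 * (DLB.fhat gt r)^2) := by
      intro r
      by_cases hw : hammingWt r ≤ d
      · exact mul_le_mul_of_nonneg_right (by exact_mod_cast hw) (by positivity)
      · have hz : DLB.fhat gt r = 0 := by
          rw [hfc r]
          exact hdeg r (lt_of_not_ge hw)
        rw [hz]
        simp
    have hsq : ∑ x : Fin n → Bool, gt x * gt x ≤ S := by
      rw [hSdef]
      exact Finset.sum_le_sum fun x _ => by nlinarith [hg0 x, hg1 x]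
    calc T = 2 ^ n * ∑ r : Fin n → Bool,
            (hammingWt r : ℝ) * (4 * (DLB.fhat gt r)^2) := hT4
      _ ≤ 2 ^ n * ∑ r : Fin n → Bool, (d:ℝ) * (4 * (DLB.fhat gt r)^2) := by
          refine mul_le_mul_of_nonneg_left (Finset.sum_le_sum fun r _ => hbound r) h2.le
      _ = 4 * d * (2 ^ n * ∑ r : Fin n → Bool, DLB.fhat gt r * DLB.fhat gt r) := by
          rw [Finset.mul_sum, Finset.mul_sum, Finset.mul_sum]
          exact Finset.sum_congr rfl fun r _ => by ring
      _ = 4 * d * ∑ x : Fin n → Bool, gt x * gt x := by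
          rw [← DLB.parseval_mul gt gt]
      _ ≤ 4 * d * S := by
          refine mul_le_mul_of_nonneg_left hsq (by positivity)
  -- Combine
  have hkey : (Cs.card : ℝ) ≤ 36 * d * S := by nlinarith [hlow, hup]
  have h36 : (0:ℝ) < 36 * (S / 2 ^ n) := by positivity
  rw [ge_iff_le, div_le_iff₀ h36]
  have hn' : (0:ℝ) < n := by exact_mod_cast hn
  have e1 : (n:ℝ) * ((Cs.card : ℝ) / (2 ^ n * n)) = (Cs.card : ℝ) / 2 ^ n := by
    field_simp
  have e2 : (d:ℝ) * (36 * (S / 2 ^ n)) = 36 * d * S / 2 ^ n := by ring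
  rw [e1, e2]
  exact (div_le_div_iff_of_pos_right h2).mpr hkey
end

section
/- Let f : {0,1}^n → B be a total function with finite codomain B, and for each y ∈ B let f_y be the indicator of f⁻¹(y) and g̃_y : {0,1}^n → [0,1] a polynomial of degree at most d with |g̃_y(x) − f_y(x)| ≤ 1/3 for all x, and suppose Σ_{y∈B} g̃_y(x) ≤ 1 for every x. Then d ≥ (1/36)·E(f), where E(f) = Σ_y p_y·log₂(1/p_y) with p_y = Pr_x[f(x) = y], x uniform on {0,1}^n. -/
lemma sum_cube_succ {n : ℕ} (F : (Fin (n+1) → Bool) → ℝ) :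
    ∑ x : Fin (n+1) → Bool, F x
      = ∑ x' : Fin n → Bool, (F (Fin.cons false x') + F (Fin.cons true x')) := by
  rw [← (Fin.consEquiv (fun _ : Fin (n+1) => Bool)).sum_comp F, Fintype.sum_prod_type,
    Fintype.sum_bool, ← Finset.sum_add_distrib]
  exact Finset.sum_congr rfl fun x' _ => by rw [add_comm]; rfl

lemma card_pair_cons {n : ℕ} (ε ρ : Bool) (x' r' : Fin n → Bool) :
    (Finset.univ.filter (fun i => (Fin.cons ε x' : Fin (n+1) → Bool) i ∧ (Fin.cons ρ r' : Fin (n+1) → Bool) i)).card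
      = (if ε ∧ ρ then 1 else 0) + (Finset.univ.filter (fun i => x' i ∧ r' i)).card := by
  rw [Finset.card_filter, Finset.card_filter, Fin.sum_univ_succ]
  simp [Fin.cons_zero, Fin.cons_succ]

lemma hammingWt_cons {n : ℕ} (ρ : Bool) (r' : Fin n → Bool) :
    hammingWt (Fin.cons ρ r' : Fin (n+1) → Bool) = (if ρ then 1 else 0) + hammingWt r' := by
  unfold hammingWt
  rw [Finset.card_filter, Finset.card_filter, Fin.sum_univ_succ]
  simp [Fin.cons_zero, Fin.cons_succ]

/-- the averaged (even) part -/
noncomputable def aPart {n : ℕ} (g : (Fin (n+1) → Bool) → ℝ) : (Fin n → Bool) → ℝ :=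
  fun x' => (g (Fin.cons false x') + g (Fin.cons true x')) / 2

/-- the odd part -/
noncomputable def bPart {n : ℕ} (g : (Fin (n+1) → Bool) → ℝ) : (Fin n → Bool) → ℝ :=
  fun x' => (g (Fin.cons false x') - g (Fin.cons true x')) / 2

lemma fourier_cons_false {n : ℕ} (g : (Fin (n+1) → Bool) → ℝ) (r' : Fin n → Bool) :
    cubeFourier g (Fin.cons false r') = cubeFourier (aPart g) r' := by
  unfold cubeFourier
  rw [sum_cube_succ (fun x => g x * (-1 : ℝ) ^ (Finset.univ.filter (fun i => x i ∧ (Fin.cons false r' : Fin (n+1) → Bool) i)).card)]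
  have key : ∀ x' : Fin n → Bool,
      (g (Fin.cons false x') * (-1:ℝ) ^ (Finset.univ.filter (fun i => (Fin.cons false x' : Fin (n+1) → Bool) i ∧ (Fin.cons false r' : Fin (n+1) → Bool) i)).card
       + g (Fin.cons true x') * (-1:ℝ) ^ (Finset.univ.filter (fun i => (Fin.cons true x' : Fin (n+1) → Bool) i ∧ (Fin.cons false r' : Fin (n+1) → Bool) i)).card)
      = 2 * (aPart g x' * (-1:ℝ) ^ (Finset.univ.filter (fun i => x' i ∧ r' i)).card) := by
    intro x'
    rw [card_pair_cons, card_pair_cons]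
    simp only [aPart]
    norm_num
    ring
  rw [Finset.sum_congr rfl (fun x' _ => key x')]
  rw [← Finset.mul_sum]
  rw [pow_succ]
  field_simp

lemma fourier_cons_true {n : ℕ} (g : (Fin (n+1) → Bool) → ℝ) (r' : Fin n → Bool) :
    cubeFourier g (Fin.cons true r') = cubeFourier (bPart g) r' := by
  unfold cubeFourier
  rw [sum_cube_succ (fun x => g x * (-1 : ℝ) ^ (Finset.univ.filter (fun i => x i ∧ (Fin.cons true r' : Fin (n+1) → Bool) i)).card)]
  have key : ∀ x' : Fin n → Bool,
      (g (Fin.cons false x') * (-1:ℝ) ^ (Finset.univ.filter (fun i => (Fin.cons false x' : Fin (n+1) → Bool) i ∧ (Fin.cons true r' : Fin (n+1) → Bool) i)).card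
       + g (Fin.cons true x') * (-1:ℝ) ^ (Finset.univ.filter (fun i => (Fin.cons true x' : Fin (n+1) → Bool) i ∧ (Fin.cons true r' : Fin (n+1) → Bool) i)).card)
      = 2 * (bPart g x' * (-1:ℝ) ^ (Finset.univ.filter (fun i => x' i ∧ r' i)).card) := by
    intro x'
    rw [card_pair_cons, card_pair_cons]
    simp only [bPart]
    norm_num [pow_add]
    ring
  rw [Finset.sum_congr rfl (fun x' _ => key x')]
  rw [← Finset.mul_sum]
  rw [pow_succ]
  field_simp

lemma g_cons_false {n : ℕ} (g : (Fin (n+1) → Bool) → ℝ) (x' : Fin n → Bool) :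
    g (Fin.cons false x') = aPart g x' + bPart g x' := by
  simp [aPart, bPart]; ring

lemma g_cons_true {n : ℕ} (g : (Fin (n+1) → Bool) → ℝ) (x' : Fin n → Bool) :
    g (Fin.cons true x') = aPart g x' - bPart g x' := by
  simp [aPart, bPart]; ring

lemma cube_eq_cons {n : ℕ} (x : Fin (n+1) → Bool) :
    ∃ (ε : Bool) (x' : Fin n → Bool), x = Fin.cons ε x' :=
  ⟨x 0, Fin.tail x, (Fin.cons_self_tail x).symm⟩

lemma zero_of_fourier_zero : ∀ (n : ℕ) (g : (Fin n → Bool) → ℝ),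
    (∀ r, cubeFourier g r = 0) → ∀ x, g x = 0 := by
  intro n
  induction n with
  | zero =>
    intro g h x
    have h0 := h x
    unfold cubeFourier at h0
    rw [Finset.sum_eq_single_of_mem x (Finset.mem_univ x) (by
      intro y _ hy; exact absurd (Subsingleton.elim y x) hy)] at h0
    simpa using h0
  | succ m ih =>
    intro g h x
    have ha : ∀ x', aPart g x' = 0 := ih (aPart g) (fun r' => by
      rw [← fourier_cons_false]; exact h _)
    have hb : ∀ x', bPart g x' = 0 := ih (bPart g) (fun r' => by
      rw [← fourier_cons_true]; exact h _)
    obtain ⟨ε, x', rfl⟩ := cube_eq_cons x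
    cases ε
    · rw [g_cons_false g x', ha, hb, add_zero]
    · rw [g_cons_true g x', ha, hb, sub_zero]

lemma cubeFourier_sub {n : ℕ} (g h : (Fin n → Bool) → ℝ) (r : Fin n → Bool) :
    cubeFourier (fun x => g x - h x) r = cubeFourier g r - cubeFourier h r := by
  unfold cubeFourier
  rw [← sub_div, ← Finset.sum_sub_distrib]
  congr 1
  exact Finset.sum_congr rfl fun x _ => by ring

lemma cubeFourier_const_ne : ∀ (n : ℕ) (c : ℝ) (r : Fin n → Bool),
    (∃ i, r i = true) → cubeFourier (fun _ => c) r = 0 := by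
  intro n
  induction n with
  | zero => intro c r ⟨i, _⟩; exact i.elim0
  | succ m ih =>
    intro c r hr
    induction r using Fin.consCases with
    | cons ρ r' =>
    cases ρ
    · rw [fourier_cons_false]
      have : aPart (fun _ => c : (Fin (m+1) → Bool) → ℝ) = fun _ => c := by
        funext x'; simp [aPart]
      rw [this]
      apply ih
      obtain ⟨i, hi⟩ := hr
      refine Fin.cases ?_ (fun j hj => ⟨j, ?_⟩) i hi
      · intro h0; simp [Fin.cons_zero] at h0
      · rwa [Fin.cons_succ] at hj
    · rw [fourier_cons_true]
      have : bPart (fun _ => c : (Fin (m+1) → Bool) → ℝ) = fun _ => 0 := by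
        funext x'; simp [bPart]
      rw [this]
      unfold cubeFourier
      simp

lemma cubeFourier_const_zero {n : ℕ} (c : ℝ) :
    cubeFourier (fun _ : Fin n → Bool => c) (fun _ : Fin n => false) = c := by
  unfold cubeFourier
  have : ∀ x : Fin n → Bool,
      (Finset.univ.filter (fun i => x i ∧ (false : Bool))).card = 0 := by
    intro x; simp
  simp only [this]
  simp [Finset.card_univ]

lemma eq_const_of_deg_zero {n : ℕ} (g : (Fin n → Bool) → ℝ)
    (h : ∀ r, 0 < hammingWt r → cubeFourier g r = 0) :
    ∀ x, g x = cubeFourier g (fun _ => false) := by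
  intro x
  set c := cubeFourier g (fun _ => false) with hc
  have key : ∀ r, cubeFourier (fun x => g x - c) r = 0 := by
    intro r
    rw [cubeFourier_sub]
    by_cases hr : ∃ i, r i = true
    · rw [h r ?_, cubeFourier_const_ne n c r hr, sub_zero]
      unfold hammingWt
      obtain ⟨i, hi⟩ := hr
      exact Finset.card_pos.2 ⟨i, Finset.mem_filter.2 ⟨Finset.mem_univ i, hi⟩⟩
    · have : r = fun _ => false := by
        funext i
        push_neg at hr
        simpa using hr i
      rw [this, cubeFourier_const_zero, ← hc, sub_self]
  have := zero_of_fourier_zero n (fun x => g x - c) key x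
  linarith

lemma my_le_of_sq_le_sq {x y : ℝ} (hx : 0 ≤ x) (hy : 0 ≤ y) (h : x^2 ≤ y^2) : x ≤ y := by
  nlinarith

lemma bonami : ∀ (n : ℕ) (d : ℕ) (g : (Fin n → Bool) → ℝ),
    (∀ r, d < hammingWt r → cubeFourier g r = 0) →
    (2:ℝ)^n * ∑ x : Fin n → Bool, (g x)^4 ≤ 9^d * (∑ x : Fin n → Bool, (g x)^2)^2 := by
  intro n
  induction n with
  | zero =>
    intro d g _
    rw [Fintype.sum_unique (fun x : Fin 0 → Bool => (g x)^4),
      Fintype.sum_unique (fun x : Fin 0 → Bool => (g x)^2)]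
    have h9 : (1:ℝ) ≤ 9^d := one_le_pow₀ (by norm_num : (1:ℝ) ≤ 9)
    nlinarith [sq_nonneg ((g default)^2)]
  | succ m ih =>
    intro d g hdeg
    set a := aPart g with ha
    set b := bPart g with hb
    have h4 : ∑ x : Fin (m+1) → Bool, (g x)^4
        = 2 * (∑ x' : Fin m → Bool, (a x')^4) + 12 * (∑ x' : Fin m → Bool, (a x')^2 * (b x')^2)
          + 2 * (∑ x' : Fin m → Bool, (b x')^4) := by
      rw [sum_cube_succ (fun x => (g x)^4), Finset.mul_sum, Finset.mul_sum, Finset.mul_sum,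
        ← Finset.sum_add_distrib, ← Finset.sum_add_distrib]
      refine Finset.sum_congr rfl fun x' _ => ?_
      rw [g_cons_false g x', g_cons_true g x', ← ha, ← hb]
      ring
    have h2 : ∑ x : Fin (m+1) → Bool, (g x)^2
        = 2 * (∑ x' : Fin m → Bool, (a x')^2) + 2 * (∑ x' : Fin m → Bool, (b x')^2) := by
      rw [sum_cube_succ (fun x => (g x)^2), Finset.mul_sum, Finset.mul_sum,
        ← Finset.sum_add_distrib]
      refine Finset.sum_congr rfl fun x' _ => ?_
      rw [g_cons_false g x', g_cons_true g x', ← ha, ← hb]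
      ring
    have hda : ∀ r', d < hammingWt r' → cubeFourier a r' = 0 := by
      intro r' hr'
      rw [ha, ← fourier_cons_false]
      apply hdeg
      rw [hammingWt_cons]
      simpa using hr'
    have hA := ih d a hda
    -- abbreviations
    set A4 := ∑ x' : Fin m → Bool, (a x')^4 with hA4
    set B4 := ∑ x' : Fin m → Bool, (b x')^4 with hB4
    set A2 := ∑ x' : Fin m → Bool, (a x')^2 with hA2
    set B2 := ∑ x' : Fin m → Bool, (b x')^2 with hB2
    set C := ∑ x' : Fin m → Bool, (a x')^2 * (b x')^2 with hC
    have hCnn : 0 ≤ C := Finset.sum_nonneg fun x _ => by positivity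
    have hA2nn : 0 ≤ A2 := Finset.sum_nonneg fun x _ => by positivity
    have hB2nn : 0 ≤ B2 := Finset.sum_nonneg fun x _ => by positivity
    have hA4nn : 0 ≤ A4 := Finset.sum_nonneg fun x _ => by positivity
    have hB4nn : 0 ≤ B4 := Finset.sum_nonneg fun x _ => by positivity
    have hPnn : (0:ℝ) ≤ 2^m := by positivity
    have hCS : C^2 ≤ A4 * B4 := by
      have := Finset.sum_mul_sq_le_sq_mul_sq Finset.univ
        (fun x' : Fin m → Bool => (a x')^2) (fun x' : Fin m → Bool => (b x')^2)
      calc C^2 ≤ (∑ x' : Fin m → Bool, ((a x')^2)^2) * (∑ x' : Fin m → Bool, ((b x')^2)^2) := this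
        _ = A4 * B4 := by
            rw [hA4, hB4]
            congr 1 <;> exact Finset.sum_congr rfl fun x _ => by ring
    rw [h4, h2, pow_succ]
    cases d with
    | zero =>
      have hbz : ∀ x', b x' = 0 := by
        intro x'
        apply zero_of_fourier_zero m b (fun r' => ?_) x'
        rw [hb, ← fourier_cons_true]
        apply hdeg
        rw [hammingWt_cons]
        simp
      have hB2z : B2 = 0 := by rw [hB2]; exact Finset.sum_eq_zero fun x _ => by rw [hbz]; ring
      have hB4z : B4 = 0 := by rw [hB4]; exact Finset.sum_eq_zero fun x _ => by rw [hbz]; ring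
      have hCz : C = 0 := by rw [hC]; exact Finset.sum_eq_zero fun x _ => by rw [hbz x]; ring
      rw [hB2z, hB4z, hCz]
      simp only [pow_zero] at hA ⊢
      nlinarith
    | succ d' =>
      have hdb : ∀ r', d' < hammingWt r' → cubeFourier b r' = 0 := by
        intro r' hr'
        rw [hb, ← fourier_cons_true]
        apply hdeg
        rw [hammingWt_cons]
        simp only [if_true]
        omega
      have hB0 := ih d' b hdb
      have hB : 2^m * B4 ≤ 9^d' * B2^2 := by rw [hB4, hB2]; exact hB0
      have h9nn : (0:ℝ) < 9^d' := by positivity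
      have hPC : 2^m * C ≤ 3 * 9^d' * A2 * B2 := by
        apply my_le_of_sq_le_sq (mul_nonneg hPnn hCnn)
          (mul_nonneg (mul_nonneg (by positivity) hA2nn) hB2nn)
        have h1 : (2^m * C)^2 ≤ (2^m * A4) * (2^m * B4) := by
          calc (2^m * C)^2 = (2^m:ℝ)^2 * C^2 := by ring
            _ ≤ (2^m:ℝ)^2 * (A4 * B4) := by
                apply mul_le_mul_of_nonneg_left hCS (by positivity)
            _ = (2^m * A4) * (2^m * B4) := by ring
        calc (2^m * C)^2 ≤ (2^m * A4) * (2^m * B4) := h1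
          _ ≤ (9^(d'+1) * A2^2) * (9^d' * B2^2) := by
              apply mul_le_mul hA hB (mul_nonneg hPnn hB4nn) (by positivity)
          _ = (3 * 9^d' * A2 * B2)^2 := by rw [pow_succ]; ring
      calc (2^m * 2) * (2*A4 + 12*C + 2*B4)
          = 4*(2^m*A4) + 24*(2^m*C) + 4*(2^m*B4) := by ring
        _ ≤ 4*(9^(d'+1)*A2^2) + 24*(3*9^d'*A2*B2) + 4*(9^d'*B2^2) := by linarith
        _ ≤ 9^(d'+1) * (2*A2 + 2*B2)^2 := by
            rw [pow_succ]
            nlinarith [mul_nonneg (le_of_lt h9nn) (sq_nonneg B2)]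
-- helper: for L > 24d, d ≥ 1 natural: 2^{-L/2} * L * 3^(d+1) ≤ 36 * d
lemma key_real_ineq {d : ℕ} (hd : 1 ≤ d) {L : ℝ} (hL : 24 * d < L) :
    (2:ℝ) ^ (-(L/2)) * L * 3 ^ (d+1) ≤ 36 * d := by
  have hd1 : (1:ℝ) ≤ d := by exact_mod_cast hd
  have hL0 : (0:ℝ) ≤ L := by nlinarith
  have h1 : ((3:ℝ)) ^ (d+1) ≤ (2:ℝ) ^ (((2*d+2 : ℕ) : ℝ)) := by
    rw [Real.rpow_natCast]
    calc (3:ℝ)^(d+1) ≤ 4^(d+1) := pow_le_pow_left₀ (by norm_num) (by norm_num) (d+1)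
      _ = 2^(2*d+2) := by rw [show (4:ℝ) = 2^2 by norm_num, ← pow_mul]; ring_nf
  have h2 : ((2*d+2 : ℕ) : ℝ) ≤ L / 6 := by
    push_cast
    nlinarith
  have h3 : (2:ℝ) ^ (((2*d+2 : ℕ) : ℝ)) ≤ (2:ℝ) ^ (L/6) :=
    Real.rpow_le_rpow_of_exponent_le (by norm_num) h2
  have h4 : (2:ℝ) ^ (-(L/2)) * (3:ℝ)^(d+1) ≤ (2:ℝ) ^ (-(L/3)) := by
    calc (2:ℝ) ^ (-(L/2)) * (3:ℝ)^(d+1) ≤ (2:ℝ) ^ (-(L/2)) * (2:ℝ) ^ (L/6) := by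
          apply mul_le_mul_of_nonneg_left (h1.trans h3) (Real.rpow_nonneg (by norm_num) _)
      _ = (2:ℝ) ^ (-(L/2) + L/6) := (Real.rpow_add (by norm_num) _ _).symm
      _ = (2:ℝ) ^ (-(L/3)) := by ring_nf
  have h5 : L ≤ 36 * (2:ℝ) ^ (L/3) := by
    have hexp : (2:ℝ) ^ (L/3) = Real.exp (Real.log 2 * (L/3)) := by
      rw [Real.rpow_def_of_pos (by norm_num)]
    have hln : (0.6931471803 : ℝ) < Real.log 2 := Real.log_two_gt_d9
    have := Real.add_one_le_exp (Real.log 2 * (L/3))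
    nlinarith [Real.exp_pos (Real.log 2 * (L/3))]
  have hpow3 : (0:ℝ) < (2:ℝ) ^ (L/3) := Real.rpow_pos_of_pos (by norm_num) _
  have h6 : L * (2:ℝ) ^ (-(L/3)) ≤ 36 := by
    have hinv : (2:ℝ) ^ (-(L/3)) = ((2:ℝ) ^ (L/3))⁻¹ := by
      rw [Real.rpow_neg (by norm_num)]
    rw [hinv]
    calc L * ((2:ℝ)^(L/3))⁻¹ = L / (2:ℝ)^(L/3) := by ring
      _ ≤ 36 / 1 := by
          rw [div_le_div_iff₀ hpow3 (by norm_num)]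
          nlinarith
      _ = 36 := by norm_num
  calc (2:ℝ) ^ (-(L/2)) * L * 3 ^ (d+1)
      = L * ((2:ℝ) ^ (-(L/2)) * 3^(d+1)) := by ring
    _ ≤ L * (2:ℝ) ^ (-(L/3)) := by
        apply mul_le_mul_of_nonneg_left h4 hL0
    _ ≤ 36 := h6
    _ ≤ 36 * d := by nlinarith

lemma perY {n d : ℕ} (g : (Fin n → Bool) → ℝ) (A : Finset (Fin n → Bool))
    (h0 : ∀ x, 0 ≤ g x) (h43 : ∀ x, g x ≤ 4/3)
    (h23 : ∀ x ∈ A, 2/3 ≤ g x) (h13 : ∀ x ∉ A, g x ≤ 1/3)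
    (hdeg : ∀ r, d < hammingWt r → cubeFourier g r = 0) :
    (A.card : ℝ)/2^n * Real.logb 2 (1/((A.card:ℝ)/2^n))
      ≤ 36 * d * ((∑ x : Fin n → Bool, g x)/2^n) := by
  have hN : (0:ℝ) < 2^n := by positivity
  set p : ℝ := (A.card : ℝ)/2^n with hp
  set μ : ℝ := (∑ x : Fin n → Bool, g x)/2^n with hμ
  have hp0 : 0 ≤ p := by positivity
  have hcard_le : (A.card : ℝ) ≤ 2^n := by
    have hnat : A.card ≤ 2^n := by
      simpa [Fintype.card_fun] using Finset.card_le_univ A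
    exact_mod_cast hnat
  have hp1 : p ≤ 1 := by rw [hp, div_le_one hN]; exact hcard_le
  have hμ0 : 0 ≤ μ := by
    rw [hμ]
    apply div_nonneg (Finset.sum_nonneg fun x _ => h0 x) (le_of_lt hN)
  -- p ≤ (3/2) μ
  have hS1 : (2/3 : ℝ) * A.card ≤ ∑ x : Fin n → Bool, g x := by
    calc (2/3 : ℝ) * A.card = ∑ _x ∈ A, (2/3 : ℝ) := by
          rw [Finset.sum_const]; ring
      _ ≤ ∑ x ∈ A, g x := Finset.sum_le_sum h23
      _ ≤ ∑ x : Fin n → Bool, g x :=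
          Finset.sum_le_sum_of_subset_of_nonneg (Finset.subset_univ A)
            (fun x _ _ => h0 x)
  have hpμ : p ≤ (3/2) * μ := by
    rw [hp, hμ, div_le_iff₀ hN]
    have : (3/2:ℝ) * ((∑ x : Fin n → Bool, g x) / 2 ^ n) * 2 ^ n
        = (3/2) * (∑ x : Fin n → Bool, g x) := by field_simp
    rw [this]
    linarith
  -- p ≤ 9^(d+1) μ²
  have hf4 : p ≤ 9^(d+1) * μ^2 := by
    have hS4 : (16/81 : ℝ) * A.card ≤ ∑ x : Fin n → Bool, (g x)^4 := by
      calc (16/81 : ℝ) * A.card = ∑ _x ∈ A, (16/81 : ℝ) := by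
            rw [Finset.sum_const]; ring
        _ ≤ ∑ x ∈ A, (g x)^4 := by
            apply Finset.sum_le_sum
            intro x hx
            calc (16/81:ℝ) = (2/3)^4 := by norm_num
              _ ≤ (g x)^4 := pow_le_pow_left₀ (by norm_num) (h23 x hx) 4
        _ ≤ ∑ x : Fin n → Bool, (g x)^4 :=
            Finset.sum_le_sum_of_subset_of_nonneg (Finset.subset_univ A)
              (fun x _ _ => by positivity)
    have hB := bonami n d g hdeg
    have hS2 : ∑ x : Fin n → Bool, (g x)^2 ≤ (4/3) * ∑ x : Fin n → Bool, g x := by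
      rw [Finset.mul_sum]
      apply Finset.sum_le_sum
      intro x _
      nlinarith [h0 x, h43 x]
    have hS2nn : (0:ℝ) ≤ ∑ x : Fin n → Bool, (g x)^2 :=
      Finset.sum_nonneg fun x _ => by positivity
    have hS1nn : (0:ℝ) ≤ ∑ x : Fin n → Bool, g x :=
      Finset.sum_nonneg fun x _ => h0 x
    have h9 : (0:ℝ) < 9^d := by positivity
    -- chain: (16/81) card * 2^n ≤ 2^n * S4 ≤ 9^d S2² ≤ 9^d (16/9) S1²
    have hchain : (16/81 : ℝ) * A.card * 2^n ≤ 9^d * (16/9) * (∑ x : Fin n → Bool, g x)^2 := by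
      calc (16/81 : ℝ) * A.card * 2^n = 2^n * ((16/81) * A.card) := by ring
        _ ≤ 2^n * ∑ x : Fin n → Bool, (g x)^4 := by
            apply mul_le_mul_of_nonneg_left hS4 (le_of_lt hN)
        _ ≤ 9^d * (∑ x : Fin n → Bool, (g x)^2)^2 := hB
        _ ≤ 9^d * ((4/3) * ∑ x : Fin n → Bool, g x)^2 := by
            apply mul_le_mul_of_nonneg_left _ (le_of_lt h9)
            apply pow_le_pow_left₀ hS2nn hS2
        _ = 9^d * (16/9) * (∑ x : Fin n → Bool, g x)^2 := by ring
    rw [hp, hμ, div_le_iff₀ hN]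
    have hexp : (∑ x : Fin n → Bool, g x)^2 = ((∑ x : Fin n → Bool, g x)/2^n)^2 * (2^n)^2 := by
      field_simp
    calc (A.card : ℝ) = (81/16) * ((16/81) * A.card) := by ring
      _ ≤ (81/16) * (9^d * (16/9) * (∑ x : Fin n → Bool, g x)^2 / 2^n) := by
          rw [mul_le_mul_iff_right₀ (by norm_num : (0:ℝ) < 81/16), le_div_iff₀ hN]
          exact hchain
      _ = 9^(d+1) * (((∑ x : Fin n → Bool, g x)/2^n)^2 * (2^n)^2) / 2^n := by
          rw [← hexp, pow_succ]; ring
      _ = 9^(d+1) * ((∑ x : Fin n → Bool, g x)/2^n)^2 * 2^n := by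
          field_simp
  -- now the case analysis
  rcases eq_or_lt_of_le hp0 with hpz | hppos
  · rw [← hpz]
    simp only [zero_mul]
    exact mul_nonneg (mul_nonneg (by norm_num) (Nat.cast_nonneg d)) hμ0
  set L : ℝ := Real.logb 2 (1/p) with hL
  have hL0 : 0 ≤ L := Real.logb_nonneg (by norm_num) (by
    rw [le_div_iff₀ hppos]; linarith)
  rcases le_or_gt L (24 * d) with hcase | hcase
  · -- easy case
    have h1 : p * L ≤ p * (24 * d) := mul_le_mul_of_nonneg_left hcase hp0
    have h2 : p * (24 * d) ≤ (3/2) * μ * (24 * d) := by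
      apply mul_le_mul_of_nonneg_right hpμ (by positivity)
    calc p * L ≤ (3/2) * μ * (24*d) := by linarith
      _ = 36 * d * μ := by ring
  · -- hard case: L > 24 d
    rcases Nat.eq_zero_or_pos d with hd0 | hd1
    · -- d = 0 : g is constant, contradiction with 0 < p < 1
      exfalso
      subst hd0
      have hconst := eq_const_of_deg_zero g (by simpa using hdeg)
      have hp1' : p < 1 := by
        by_contra hge
        push_neg at hge
        have : p = 1 := le_antisymm hp1 hge
        rw [this] at hL
        simp at hL
        rw [hL] at hcase
        simp at hcase
      have hcardR : (A.card:ℝ) = p * 2^n := by rw [hp]; field_simp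
      have hcardpos : 0 < A.card := by
        have : (0:ℝ) < (A.card:ℝ) := by rw [hcardR]; exact mul_pos hppos hN
        exact_mod_cast this
      have hAne : A.Nonempty := Finset.card_pos.1 hcardpos
      have hAneuniv : ∃ x, x ∉ A := by
        by_contra hc
        push_neg at hc
        have : A = Finset.univ := Finset.eq_univ_iff_forall.2 hc
        rw [hp, this] at hp1'
        have : ((Finset.univ : Finset (Fin n → Bool)).card : ℝ) = 2^n := by
          rw [Finset.card_univ, Fintype.card_fun]; simp
        rw [this] at hp1'
        rw [div_self (ne_of_gt hN)] at hp1'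
        exact lt_irrefl 1 hp1'
      obtain ⟨x1, hx1⟩ := hAne
      obtain ⟨x2, hx2⟩ := hAneuniv
      have e1 := hconst x1
      have e2 := hconst x2
      linarith [h23 x1 hx1, h13 x2 hx2]
    · -- d ≥ 1
      have hsqrt : Real.sqrt p ≤ 3^(d+1) * μ := by
        have h1 : p ≤ (3^(d+1) * μ)^2 := by
          calc p ≤ 9^(d+1) * μ^2 := hf4
            _ = (3^(d+1) * μ)^2 := by
                rw [show (9:ℝ) = 3^2 by norm_num, ← pow_mul, mul_pow, ← pow_mul]
                ring_nf
        calc Real.sqrt p ≤ Real.sqrt ((3^(d+1) * μ)^2) := Real.sqrt_le_sqrt h1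
          _ = |3^(d+1) * μ| := Real.sqrt_sq_eq_abs _
          _ = 3^(d+1) * μ := abs_of_nonneg (by positivity)
      have hps : Real.sqrt p = (2:ℝ) ^ (-(L/2)) := by
        have h2L : (2:ℝ) ^ L = 1/p := Real.rpow_logb (by norm_num) (by norm_num) (by positivity)
        have hpL : p = (2:ℝ) ^ (-L) := by
          rw [Real.rpow_neg (by norm_num : (0:ℝ) ≤ 2), h2L]
          field_simp
        rw [hpL, Real.sqrt_eq_rpow, ← Real.rpow_mul (by norm_num : (0:ℝ) ≤ 2)]
        congr 1
        ring
      have hd1' : 1 ≤ d := hd1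
      have hkey := key_real_ineq hd1' hcase
      have hsp0 : 0 ≤ Real.sqrt p := Real.sqrt_nonneg p
      have hspsq : Real.sqrt p * Real.sqrt p = p := Real.mul_self_sqrt hp0
      have h3pos : (0:ℝ) < 3^(d+1) := by positivity
      have hkey2 : Real.sqrt p * L * 3^(d+1) ≤ 36 * d := by
        rw [hps]; exact hkey
      have h : Real.sqrt p * (Real.sqrt p * L * 3^(d+1)) ≤ Real.sqrt p * (36*d) :=
        mul_le_mul_of_nonneg_left hkey2 hsp0
      have e : p * L * 3^(d+1) = Real.sqrt p * (Real.sqrt p * L * 3^(d+1)) := by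
        linear_combination (-(L*3^(d+1))) * hspsq
      have h2 : p * L * 3^(d+1) ≤ Real.sqrt p * (36*d) := by rw [e]; exact h
      have h3 : Real.sqrt p * (36*d) ≤ 3^(d+1)*μ*(36*d) :=
        mul_le_mul_of_nonneg_right hsqrt (by positivity)
      have h4 : p * L * 3^(d+1) ≤ 36*(d:ℝ)*μ * 3^(d+1) := by nlinarith
      exact le_of_mul_le_mul_right h4 h3pos


/-- Main theorem (polynomial form): approximating all level sets of a total function
within 1/3 by degree-`d` polynomials whose values sum to at most 1 forces
`d ≥ E(f)/36`. -/
theorem main_entropy_bound {n d : ℕ} {B : Type*} [Fintype B] [DecidableEq B]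
    (f : (Fin n → Bool) → B) (gt : B → (Fin n → Bool) → ℝ)
    (hg0 : ∀ y x, 0 ≤ gt y x)
    (happrox : ∀ y x, |gt y x - (if f x = y then (1:ℝ) else 0)| ≤ 1/3)
    (hsum : ∀ x, ∑ y : B, gt y x ≤ 1)
    (hdeg : ∀ y, ∀ r : Fin n → Bool, d < hammingWt r → cubeFourier (gt y) r = 0) :
    (d : ℝ) ≥ (1/36) * ∑ y : B,
      ((Finset.univ.filter (fun x => f x = y)).card : ℝ) / 2 ^ n
        * Real.logb 2 (1 / (((Finset.univ.filter (fun x => f x = y)).card : ℝ) / 2 ^ n)) := by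
  have hN : (0:ℝ) < 2^n := by positivity
  rw [ge_iff_le]
  have key : ∀ y : B,
      ((Finset.univ.filter (fun x => f x = y)).card : ℝ) / 2 ^ n
        * Real.logb 2 (1 / (((Finset.univ.filter (fun x => f x = y)).card : ℝ) / 2 ^ n))
      ≤ 36 * d * ((∑ x : Fin n → Bool, gt y x)/2^n) := by
    intro y
    apply perY (gt y) (Finset.univ.filter (fun x => f x = y)) (hg0 y)
    · intro x
      have h := abs_le.1 (happrox y x)
      by_cases hf : f x = y
      · rw [if_pos hf] at h; linarith [h.2]
      · rw [if_neg hf] at h; linarith [h.2]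
    · intro x hx
      have hf : f x = y := (Finset.mem_filter.1 hx).2
      have h := abs_le.1 (happrox y x)
      rw [if_pos hf] at h
      linarith [h.1]
    · intro x hx
      have hf : ¬ (f x = y) := by
        intro hc
        exact hx (Finset.mem_filter.2 ⟨Finset.mem_univ x, hc⟩)
      have h := abs_le.1 (happrox y x)
      rw [if_neg hf] at h
      linarith [h.2]
    · exact hdeg y
  have hsum2 : ∑ y : B, (∑ x : Fin n → Bool, gt y x)/2^n ≤ 1 := by
    rw [← Finset.sum_div, div_le_one hN, Finset.sum_comm]
    calc ∑ x : Fin n → Bool, ∑ y : B, gt y x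
        ≤ ∑ _x : Fin n → Bool, (1:ℝ) := Finset.sum_le_sum (fun x _ => hsum x)
      _ = 2^n := by
          rw [Finset.sum_const, Finset.card_univ, Fintype.card_fun]
          simp
  have hd0 : (0:ℝ) ≤ 36 * d := by positivity
  calc (1/36 : ℝ) * ∑ y : B,
      ((Finset.univ.filter (fun x => f x = y)).card : ℝ) / 2 ^ n
        * Real.logb 2 (1 / (((Finset.univ.filter (fun x => f x = y)).card : ℝ) / 2 ^ n))
      ≤ (1/36 : ℝ) * ∑ y : B, 36 * (d:ℝ) * ((∑ x : Fin n → Bool, gt y x)/2^n) := by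
        apply mul_le_mul_of_nonneg_left (Finset.sum_le_sum fun y _ => key y) (by norm_num)
    _ = (d:ℝ) * ∑ y : B, (∑ x : Fin n → Bool, gt y x)/2^n := by
        rw [← Finset.mul_sum]
        ring
    _ ≤ (d:ℝ) * 1 := mul_le_mul_of_nonneg_left hsum2 (Nat.cast_nonneg d)
    _ = (d:ℝ) := mul_one _
end
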